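/- For every k > 0, the Pila activation function Pila_k : ℝ → ℝ, defined by Pila_k(x) = x for x ≥ 0 and Pila_k(x) = ((k²/2)x³ − kx² + x)·exp(kx) for x < 0, is three times continuously differentiable on ℝ (ContDiff ℝ 3), with Pila_k(0) = 0, Pila_k′(0) = 1, Pila_k″(0) = 0, and Pila_k‴(0) = 0; i.e. Pila_k matches the identity function at x = 0 up to the third derivative. -/

import Mathlib

/-!
Pila is glued at `0` from two smooth functions, and gluing two smooth functions at a point gives
a `C^n` function as soon as their derivatives of order `≤ n` agree there. On the left branch,
`(p(x) e^{kx})^{(j)} = (D^j p)(x) e^{kx}` with `D p = p' + k p`; for `p = k²x³/2 − kx² + x` the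
values `(D^j p)(0)` for `j = 0, 1, 2, 3` are `0, 1, 0, 0`, those of the identity.
-/

/-- The Pila activation function with parameter `k`. -/
noncomputable def Pila (k x : ℝ) : ℝ :=
  if 0 ≤ x then x else ((k ^ 2 / 2) * x ^ 3 - k * x ^ 2 + x) * Real.exp (k * x)

open Polynomial Real

section Gluing

variable {E : Type*} [NormedAddCommGroup E] [NormedSpace ℝ E] {f g f' g' : ℝ → E} {a : ℝ}

theorem hasDerivAt_ite_le (hf : ∀ x, HasDerivAt f (f' x) x) (hg : ∀ x, HasDerivAt g (g' x) x)
    (h : f a = g a) (h' : f' a = g' a) (x : ℝ) :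
    HasDerivAt (fun y => if a ≤ y then f y else g y) (if a ≤ x then f' x else g' x) x := by
  rcases lt_trichotomy x a with hx | rfl | hx
  · rw [if_neg hx.not_ge]
    refine (hg x).congr_of_eventuallyEq ?_
    filter_upwards [Iio_mem_nhds hx] with y hy
    rw [if_neg (not_le.2 hy)]
  · have hright : HasDerivWithinAt (fun y => if x ≤ y then f y else g y) (f' x) (Set.Ici x) x :=
      (hf x).hasDerivWithinAt.congr (fun y hy => if_pos hy) (if_pos le_rfl)
    have hleft : HasDerivWithinAt (fun y => if x ≤ y then f y else g y) (f' x) (Set.Iic x) x := by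
      rw [h']
      refine (hg x).hasDerivWithinAt.congr (fun y hy => ?_) (by simp [h])
      rcases (Set.mem_Iic.mp hy).lt_or_eq with hy | rfl
      · rw [if_neg hy.not_ge]
      · simp [h]
    rw [if_pos le_rfl, ← hasDerivWithinAt_univ, ← Set.Iic_union_Ici]
    exact hleft.union hright
  · rw [if_pos hx.le]
    refine (hf x).congr_of_eventuallyEq ?_
    filter_upwards [Ioi_mem_nhds hx] with y hy
    rw [if_pos hy.le]

theorem ContDiff.hasDerivAt_iteratedDeriv {h : ℝ → E} {n j : ℕ} (hh : ContDiff ℝ n h)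
    (hj : j < n) (x : ℝ) : HasDerivAt (iteratedDeriv j h) (iteratedDeriv (j + 1) h x) x := by
  rw [iteratedDeriv_succ]
  exact (hh.differentiable_iteratedDeriv j (by exact_mod_cast hj)).differentiableAt.hasDerivAt

variable {n : ℕ} (hf : ContDiff ℝ n f) (hg : ContDiff ℝ n g)
  (hfg : ∀ j ≤ n, iteratedDeriv j f a = iteratedDeriv j g a)
include hf hg hfg

theorem iteratedDeriv_ite_le {j : ℕ} (hj : j ≤ n) :
    iteratedDeriv j (fun x => if a ≤ x then f x else g x) =
      fun x => if a ≤ x then iteratedDeriv j f x else iteratedDeriv j g x := by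
  induction j with
  | zero => simp
  | succ j ih =>
    rw [iteratedDeriv_succ, ih (by omega)]
    funext x
    exact (hasDerivAt_ite_le (hf.hasDerivAt_iteratedDeriv hj) (hg.hasDerivAt_iteratedDeriv hj)
      (hfg j (by omega)) (hfg (j + 1) hj) x).deriv

theorem contDiff_ite_le : ContDiff ℝ n (fun x => if a ≤ x then f x else g x) := by
  refine contDiff_iff_iteratedDeriv.2 ⟨fun j hj => ?_, fun j hj => ?_⟩
  · have hj : j ≤ n := by exact_mod_cast hj
    rw [iteratedDeriv_ite_le hf hg hfg hj]
    exact Continuous.if_le (hf.continuous_iteratedDeriv j (by exact_mod_cast hj))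
      (hg.continuous_iteratedDeriv j (by exact_mod_cast hj)) continuous_const continuous_id
      fun x hx => hx ▸ hfg j hj
  · have hj : j < n := by exact_mod_cast hj
    rw [iteratedDeriv_ite_le hf hg hfg hj.le]
    exact fun x => (hasDerivAt_ite_le (hf.hasDerivAt_iteratedDeriv hj)
      (hg.hasDerivAt_iteratedDeriv hj) (hfg j hj.le) (hfg (j + 1) hj) x).differentiableAt

end Gluing

/-- The polynomial factor of `(p(x) e^{kx})'`. -/
noncomputable def twistedDerivative (k : ℝ) (p : ℝ[X]) : ℝ[X] := derivative p + C k * p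

theorem hasDerivAt_eval_mul_exp (k : ℝ) (p : ℝ[X]) (x : ℝ) :
    HasDerivAt (fun x => p.eval x * exp (k * x))
      ((twistedDerivative k p).eval x * exp (k * x)) x := by
  refine ((p.hasDerivAt x).mul ((hasDerivAt_id' x).const_mul k).exp).congr_deriv ?_
  simp only [twistedDerivative, eval_add, eval_mul, eval_C]
  ring

theorem iteratedDeriv_eval_mul_exp (k : ℝ) (n : ℕ) (p : ℝ[X]) :
    iteratedDeriv n (fun x => p.eval x * exp (k * x)) =
      fun x => ((twistedDerivative k)^[n] p).eval x * exp (k * x) := by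
  induction n generalizing p with
  | zero => rfl
  | succ n ih =>
    rw [iteratedDeriv_succ', funext fun x => (hasDerivAt_eval_mul_exp k p x).deriv, ih,
      Function.iterate_succ_apply]

theorem contDiff_eval_mul_exp (k : ℝ) (p : ℝ[X]) {n : WithTop ℕ∞} :
    ContDiff ℝ n (fun x => p.eval x * exp (k * x)) := by
  simpa using (p.contDiff_aeval (𝕜 := ℝ) n).mul (contDiff_const.mul contDiff_id).exp

theorem pila_contDiff_three_and_matches_id (k : ℝ) :
    ContDiff ℝ 3 (Pila k) ∧
    Pila k 0 = 0 ∧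
    deriv (Pila k) 0 = 1 ∧
    iteratedDeriv 2 (Pila k) 0 = 0 ∧
    iteratedDeriv 3 (Pila k) 0 = 0 := by
  set p : ℝ[X] := C (k ^ 2 / 2) * X ^ 3 - C k * X ^ 2 + X
  have hPila : Pila k = fun x => if 0 ≤ x then id x else p.eval x * exp (k * x) := by
    funext x
    simp [Pila, p]
  have hmatch : ∀ j ≤ 3,
      iteratedDeriv j id 0 = iteratedDeriv j (fun x => p.eval x * exp (k * x)) 0 := by
    intro j hj
    simp only [iteratedDeriv_id, iteratedDeriv_eval_mul_exp]
    interval_cases j <;> simp [twistedDerivative, p] <;> ring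
  have hiter {j : ℕ} (hj : j ≤ 3) : iteratedDeriv j (Pila k) 0 = iteratedDeriv j id 0 := by
    rw [hPila, iteratedDeriv_ite_le contDiff_id (contDiff_eval_mul_exp k p) hmatch hj]
    exact if_pos le_rfl
  refine ⟨hPila ▸ contDiff_ite_le contDiff_id (contDiff_eval_mul_exp k p) hmatch,
    by simp [Pila], ?_, ?_, ?_⟩
  · rw [← iteratedDeriv_one, hiter (by norm_num), iteratedDeriv_id]; rfl
  · rw [hiter (by norm_num), iteratedDeriv_id]; rfl
  · rw [hiter (by norm_num), iteratedDeriv_id]; rfl
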